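/- arXiv:1704.03954 — 2 statements merged into one kernel-verified Lean document; each statement's English description precedes it below -/
import Mathlib

section
/- Let (C^1, …, C^k) be an admissible family in ℝ^n and assume each C^i has at least one extreme point. Let R := {(x, x^1, …, x^k, y) ∈ ℝ^n × (ℝ^n)^k × ℝ^k : Σ_{i=1}^k y_i = 1, y_i ≥ 0 for all i, Σ_{i=1}^k x^i = x, and for every i: (y_i > 0 → x^i ∈ y_i • C^i) and (y_i = 0 → x^i ∈ rec(C^i))}. Then R contains no line (there is no point p ∈ R and direction d ≠ 0 with p + t·d ∈ R for all t ∈ ℝ), and every extreme point (x, x^1, …, x^k, y) of R satisfies y ∈ {0,1}^k. -/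
open Pointwise Set

noncomputable section

/-- The recession cone of a set. -/
def recCone {E : Type*} [AddCommGroup E] [Module ℝ E] (S : Set E) : Set E :=
  {d | ∀ x ∈ S, ∀ t : ℝ, 0 ≤ t → x + t • d ∈ S}

/-- An admissible family: each member is a nonempty closed convex set and all members share
the same recession cone. -/
def Admissible {n k : ℕ} (C : Fin k → Set (Fin n → ℝ)) : Prop :=
  (∀ i, (C i).Nonempty) ∧ (∀ i, IsClosed (C i)) ∧ (∀ i, Convex ℝ (C i)) ∧
    ∀ i j, recCone (C i) = recCone (C j)

/-- The continuous relaxation of the extended formulation (2). -/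
def Rset {n k : ℕ} (C : Fin k → Set (Fin n → ℝ)) :
    Set ((Fin n → ℝ) × (Fin k → Fin n → ℝ) × (Fin k → ℝ)) :=
  {p | (∑ i, p.2.2 i = 1) ∧ (∀ i, 0 ≤ p.2.2 i) ∧ (∑ i, p.2.1 i = p.1) ∧
    ∀ i, (0 < p.2.2 i → p.2.1 i ∈ p.2.2 i • C i) ∧
         (p.2.2 i = 0 → p.2.1 i ∈ recCone (C i))}

/-! A line in `Rset C` is constant in `y`, since `y ≥ 0`; its `i`-th block is then a line in
`y_i • C^i` or in `rec C^i`, hence yields a line in `C^i`. A closed convex set with an extreme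
point `e` contains no line: a line direction `d` gives `±d ∈ rec C^i`, so `e` is the midpoint
of `e ± d`. At a point of `Rset C` with two positive weights `y_j, y_l`, shifting a little
weight between the two blocks, along the rays `y ↦ y • w` through them, stays in `Rset C` in
both directions, so the point is not extreme. -/

open Filter Topology

theorem eq_zero_of_add_mem_of_sub_mem {𝕜 E : Type*} [Field 𝕜] [LinearOrder 𝕜]
    [IsStrictOrderedRing 𝕜] [AddCommGroup E] [Module 𝕜 E] {A : Set E} {x e : E}
    (hx : x ∈ A.extremePoints 𝕜) (h₁ : x + e ∈ A) (h₂ : x - e ∈ A) : e = 0 := by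
  have hmid : x ∈ openSegment 𝕜 (x + e) (x - e) :=
    ⟨1 / 2, 1 / 2, by norm_num, by norm_num, by norm_num, by module⟩
  exact add_eq_left.mp (hx.2 h₁ h₂ hmid)

section LineFree

variable {E : Type*} [AddCommGroup E] [Module ℝ E] {S : Set E}

def LineFree (S : Set E) : Prop :=
  ∀ x d : E, (∀ t : ℝ, x + t • d ∈ S) → d = 0

theorem add_mem_of_mem_recCone {x d : E} (hx : x ∈ S) (hd : d ∈ recCone S) : x + d ∈ S := by
  simpa using hd x hx 1 zero_le_one

theorem lineFree_Ici (a : ℝ) : LineFree (Ici a) := by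
  intro x d h
  by_contra hd
  have h' : a ≤ x + (a - 1 - x) / d * d := h _
  rw [div_mul_cancel₀ _ hd] at h'
  linarith

theorem LineFree.recCone (h : LineFree S) (hne : S.Nonempty) : LineFree (recCone S) := by
  obtain ⟨c, hc⟩ := hne
  exact fun x d hl => h (c + x) d fun t => by
    simpa only [add_assoc] using add_mem_of_mem_recCone hc (hl t)

theorem LineFree.smul_set (h : LineFree S) (a : ℝ) : LineFree (a • S) := by
  intro x d hl
  rcases eq_or_ne a 0 with rfl | ha
  · have h₀ : x + (0 : ℝ) • d = 0 := Set.zero_smul_set_subset S (hl 0)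
    have h₁ : x + (1 : ℝ) • d = 0 := Set.zero_smul_set_subset S (hl 1)
    rw [zero_smul, add_zero] at h₀
    simpa [h₀] using h₁
  · have hS : ∀ t : ℝ, a⁻¹ • x + t • (a⁻¹ • d) ∈ S := fun t => by
      rw [smul_comm t, ← smul_add]
      exact (Set.mem_smul_set_iff_inv_smul_mem₀ ha S _).mp (hl t)
    exact (smul_eq_zero_iff_right (inv_ne_zero ha)).mp (h _ _ hS)

variable [TopologicalSpace E] [ContinuousAdd E] [ContinuousSMul ℝ E]

/-- `x + t • d` is the limit, as `ε → 0⁺`, of the points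
`(1 - ε) • x + ε • (x₀ + (t / ε) • d)` of `S`. -/
theorem IsClosed.mem_recCone_of_forall_add_smul_mem (hS : IsClosed S) (hc : Convex ℝ S)
    {x₀ d : E} (h : ∀ t : ℝ, 0 ≤ t → x₀ + t • d ∈ S) : d ∈ recCone S := by
  intro x hx t ht
  have hmem : ∀ ε ∈ Ioc (0 : ℝ) 1, x + t • d + ε • (x₀ - x) ∈ S := by
    rintro ε ⟨hε₀, hε₁⟩
    convert hc hx (h (t / ε) (by positivity)) (sub_nonneg.mpr hε₁) hε₀.le (by ring) using 1
    rw [smul_add, smul_smul, mul_div_cancel₀ t hε₀.ne']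
    module
  have hlim :
      Tendsto (fun ε : ℝ => x + t • d + ε • (x₀ - x)) (𝓝[>] 0) (𝓝 (x + t • d)) := by
    have hcont : Continuous fun ε : ℝ => x + t • d + ε • (x₀ - x) := by fun_prop
    simpa using (hcont.tendsto 0).mono_left nhdsWithin_le_nhds
  exact hS.mem_of_tendsto hlim (eventually_of_mem (Ioc_mem_nhdsGT zero_lt_one) hmem)

theorem lineFree_of_extremePoints_nonempty (hS : IsClosed S) (hc : Convex ℝ S)
    (he : (S.extremePoints ℝ).Nonempty) : LineFree S := by
  intro x d hl
  obtain ⟨e, he⟩ := he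
  have hd : d ∈ recCone S := hS.mem_recCone_of_forall_add_smul_mem hc fun t _ => hl t
  have hnd : -d ∈ recCone S :=
    hS.mem_recCone_of_forall_add_smul_mem hc (x₀ := x) fun t _ => by simpa using hl (-t)
  refine eq_zero_of_add_mem_of_sub_mem he (add_mem_of_mem_recCone he.1 hd) ?_
  simpa [sub_eq_add_neg] using add_mem_of_mem_recCone he.1 hnd

end LineFree

section Rset

variable {n k : ℕ} {C : Fin k → Set (Fin n → ℝ)}

theorem lineFree_Rset (hne : ∀ i, (C i).Nonempty) (hC : ∀ i, LineFree (C i)) :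
    LineFree (Rset C) := by
  rintro ⟨x, X, y⟩ ⟨dx, dX, dy⟩ hl
  have hdy : dy = 0 := funext fun i => lineFree_Ici 0 (y i) (dy i) fun t => (hl t).2.1 i
  have hp : (x, X, y) ∈ Rset C := by simpa using hl 0
  have hdX : dX = 0 := by
    funext i
    rcases (hp.2.1 i).eq_or_lt with hy | hy
    · refine (hC i).recCone (hne i) (X i) (dX i) fun t => ((hl t).2.2.2 i).2 ?_
      simpa [hdy] using hy.symm
    · refine (hC i).smul_set (y i) (X i) (dX i) fun t => ?_
      simpa [hdy] using ((hl t).2.2.2 i).1 (by simpa [hdy] using hy)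
  have hdx : dx = 0 := by
    have h₀ := (hl 0).2.2.1
    have h₁ := (hl 1).2.2.1
    simp only [hdX, zero_smul, one_smul, add_zero] at h₀ h₁
    simpa [h₀] using h₁
  simp [hdx, hdX, hdy]

/-- Each pair `(q.2.1 i, q.2.2 i) = q.2.2 i • (w i, 1)` is moved along its ray in the cone
over `C i`. -/
theorem add_mem_Rset {q} (hq : q ∈ Rset C) {c : Fin k → ℝ} {w : Fin k → Fin n → ℝ}
    (hc : ∑ i, c i = 0)
    (hw : ∀ i, c i ≠ 0 → w i ∈ C i ∧ q.2.2 i • w i = q.2.1 i ∧ 0 < q.2.2 i + c i) :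
    q + (∑ i, c i • w i, fun i => c i • w i, c) ∈ Rset C := by
  obtain ⟨hsum, hnn, hX, hmem⟩ := hq
  refine ⟨?_, fun i => ?_, ?_, fun i => ?_⟩
  · simp [Finset.sum_add_distrib, hsum, hc]
  · rcases eq_or_ne (c i) 0 with h | h
    · simpa [h] using hnn i
    · exact (hw i h).2.2.le
  · simp [Finset.sum_add_distrib, hX]
  · rcases eq_or_ne (c i) 0 with h | h
    · simpa [h] using hmem i
    · obtain ⟨hwC, hXw, hpos⟩ := hw i h
      refine ⟨fun _ => ?_, fun h0 => absurd h0 hpos.ne'⟩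
      have hshift : q.2.1 i + c i • w i = (q.2.2 i + c i) • w i := by rw [← hXw, add_smul]
      simpa [hshift] using smul_mem_smul_set hwC

theorem eq_of_mem_extremePoints_Rset {q} (hq : q ∈ (Rset C).extremePoints ℝ) {j l : Fin k}
    (hj : 0 < q.2.2 j) (hl : 0 < q.2.2 l) : j = l := by
  by_contra hjl
  choose! w hwC hXw using fun i hi => (hq.1.2.2.2 i).1 hi
  obtain ⟨ε, hε, hεjl⟩ := exists_between (lt_min hj hl)
  obtain ⟨hεj, hεl⟩ := lt_min_iff.mp hεjl
  set c : Fin k → ℝ := Pi.single j ε - Pi.single l ε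
  have hcj : c j = ε := by simp [c, Ne.symm hjl]
  have hsum : ∑ i, c i = 0 := by simp [c, Finset.sum_sub_distrib]
  have hw : ∀ i, c i ≠ 0 → w i ∈ C i ∧ q.2.2 i • w i = q.2.1 i ∧ |c i| < q.2.2 i := by
    intro i hi
    have hpos : |c i| < q.2.2 i := by
      by_cases hij : i = j
      · subst hij; simpa [hcj, abs_of_pos hε] using hεj
      by_cases hil : i = l
      · subst hil; simpa [c, hjl, abs_of_pos hε] using hεl
      · simp [c, hij, hil] at hi
    have hyi : 0 < q.2.2 i := (abs_nonneg _).trans_lt hpos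
    exact ⟨hwC i hyi, hXw i hyi, hpos⟩
  set v : (Fin n → ℝ) × (Fin k → Fin n → ℝ) × (Fin k → ℝ) :=
    (∑ i, c i • w i, fun i => c i • w i, c)
  have hadd : q + v ∈ Rset C := add_mem_Rset hq.1 hsum fun i hi =>
    ⟨(hw i hi).1, (hw i hi).2.1, by linarith [neg_abs_le (c i), (hw i hi).2.2]⟩
  have hsub : q - v ∈ Rset C := by
    have hneg : -v = (∑ i, (-c) i • w i, fun i => (-c) i • w i, -c) := by
      simp only [v, Prod.neg_mk, Pi.neg_apply, neg_smul, Finset.sum_neg_distrib]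
      rfl
    rw [sub_eq_add_neg, hneg]
    refine add_mem_Rset hq.1 (by simp [hsum]) fun i hi => ?_
    have hi' : c i ≠ 0 := by simpa using hi
    exact ⟨(hw i hi').1, (hw i hi').2.1, by
      rw [Pi.neg_apply]; linarith [le_abs_self (c i), (hw i hi').2.2]⟩
  have hv : v = 0 := eq_zero_of_add_mem_of_sub_mem hq hadd hsub
  have : c j = 0 := congrFun (congrArg (fun p => p.2.2) hv) j
  linarith

theorem eq_zero_or_eq_one_of_mem_extremePoints_Rset {q} (hq : q ∈ (Rset C).extremePoints ℝ)
    (i : Fin k) : q.2.2 i = 0 ∨ q.2.2 i = 1 := by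
  obtain ⟨hsum, hnn, -, -⟩ := hq.1
  rcases (hnn i).eq_or_lt with h | hi
  · exact Or.inl h.symm
  · refine Or.inr (hsum ▸ (Finset.sum_eq_single i (fun l _ hli => ?_) (by simp)).symm)
    have hl : ¬0 < q.2.2 l := fun hl => hli (eq_of_mem_extremePoints_Rset hq hl hi)
    exact ((hnn l).eq_or_lt.resolve_right hl).symm

end Rset

/-- The continuous relaxation of the extended formulation is line-free and all its extreme
points have integral `y` components. -/
theorem stmt1 {n k : ℕ} (C : Fin k → Set (Fin n → ℝ)) (hC : Admissible C)
    (hext : ∀ i, (Set.extremePoints ℝ (C i)).Nonempty) :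
    (¬ ∃ p ∈ Rset C, ∃ d, d ≠ 0 ∧ ∀ t : ℝ, p + t • d ∈ Rset C) ∧
    (∀ q ∈ Set.extremePoints ℝ (Rset C), ∀ i, q.2.2 i = 0 ∨ q.2.2 i = 1) := by
  obtain ⟨hne, hcl, hcv, -⟩ := hC
  have hlf : LineFree (Rset C) :=
    lineFree_Rset hne fun i => lineFree_of_extremePoints_nonempty (hcl i) (hcv i) (hext i)
  exact ⟨fun ⟨p, _, d, hd, hl⟩ => hd (hlf p d hl),
    fun q hq => eq_zero_or_eq_one_of_mem_extremePoints_Rset hq⟩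
end
end

section
/- Let {v^1, …, v^n} be an orthonormal basis of ℝ^n. For s ∈ {−1,0,1}^n let K^s := {Σ_{j=1}^n λ_j s_j v^j : λ_1, …, λ_n ≥ 0}. Let G^1, …, G^k ⊆ ℝ^n be closed convex sets with 0 ∈ G^i, let s^1, …, s^k ∈ {−1,1}^n, and set D^i := G^i ∩ K^{s^i}. Assume: (1) for each i, (D^i − K^{s^i}) ∩ K^{s^i} = D^i and D^i is compact; (2) for every t ∈ {−1,1}^n there exist pairwise disjoint sets J^t_1, …, J^t_k ⊆ {1,…,n} such that D^i + K^t = (D^i ∩ span{v^j : j ∈ J^t_i}) + K^t for every i (where span of the empty set is {0}). Let b^1, …, b^k ∈ ℝ^n and C^i := D^i + b^i. For i, l ∈ {1,…,k} and j ∈ {1,…,n} define v^{i,j} := s^i_j v^j, b̄^{i,l}_j := max{⟨v^{i,j}, x⟩ : x ∈ C^l} for l ≠ i, b̄^{i,i}_j := ⟨v^{i,j}, b^i⟩, L^i_j := min{⟨v^j, x⟩ : x ∈ C^i}, and U^i_j := max{⟨v^j, x⟩ : x ∈ C^i} (these extrema exist by compactness). Then Q(C^1,…,C^k) equals the set of all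 (x, y) ∈ ℝ^n × ℝ^k such that: y ∈ Δ^k; for every j ∈ {1,…,n}, Σ_{i=1}^k L^i_j y_i ≤ ⟨v^j, x⟩ ≤ Σ_{i=1}^k U^i_j y_i; and for every i ∈ {1,…,k}, writing z^i := Σ_{j=1}^n max(0, ⟨v^{i,j}, x⟩ − Σ_{l=1}^k b̄^{i,l}_j y_l) · v^{i,j}, one has z^i ∈ y_i • G^i if y_i > 0 and z^i ∈ rec(G^i) if y_i = 0. -/
/-
In the coordinates `⟨vʲ, ·⟩` each `Dⁱ` is a compact down-set of the orthant `K^{sⁱ}`. The extrema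
`Lⁱⱼ`, `Uⁱⱼ`, `b̄ⁱˡⱼ` are values of the support functions of the `Dⁱ`, shifted by the `bⁱ`, and
`Q(C)` consists of the pairs `(∑ yᵢ wⁱ, y)` with `y ∈ Δ` and `wⁱ ∈ Cⁱ`; after translating `x` by
`∑ yᵢ bⁱ`, necessity of the constraints is checked coordinatewise. For sufficiency, `∑ yᵢ Dⁱ` is
compact and convex, so by separation it suffices to find, for each sign vector `t`, a point of it
lying below the translate of `x` in the order of `K^t`. Take `∑ yᵢ dⁱ`, where `dⁱ` is `zⁱ / yᵢ`
with its coordinates outside `J^t_i` set to zero: `dⁱ ∈ Dⁱ` since `Dⁱ` is a down-set, and by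
disjointness of the `J^t_i` each coordinate is charged to at most one `i`, where the constraints
control it.
-/

open Pointwise Set

noncomputable section

/-- The Cayley embedding `Q(C¹,…,Cᵏ) = conv(⋃ᵢ Cⁱ × {eⁱ})`. -/
def CayleyQ {n k : ℕ} (C : Fin k → Set (Fin n → ℝ)) :
    Set ((Fin n → ℝ) × (Fin k → ℝ)) :=
  convexHull ℝ (⋃ i, (C i) ×ˢ ({Pi.single i 1} : Set (Fin k → ℝ)))

def dotp {n : ℕ} (u x : Fin n → ℝ) : ℝ := ∑ j, u j * x j

/-- The cone `K^s = cone{sⱼ vʲ : j}` generated by the signed basis vectors. -/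
def Kcone {n : ℕ} (v : Fin n → Fin n → ℝ) (s : Fin n → ℝ) : Set (Fin n → ℝ) :=
  {z | ∃ lam : Fin n → ℝ, (∀ j, 0 ≤ lam j) ∧ z = ∑ j, lam j • s j • v j}

section Coordinates

variable {n : ℕ} {v : Fin n → Fin n → ℝ}

lemma dotp_eq_dotProduct (u x : Fin n → ℝ) : dotp u x = u ⬝ᵥ x := rfl

lemma dotp_smul_left (c : ℝ) (u x : Fin n → ℝ) : dotp (c • u) x = c * dotp u x :=
  smul_dotProduct c u x

lemma dotp_add (u x y : Fin n → ℝ) : dotp u (x + y) = dotp u x + dotp u y :=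
  dotProduct_add u x y

lemma dotp_smul (u : Fin n → ℝ) (c : ℝ) (x : Fin n → ℝ) : dotp u (c • x) = c * dotp u x :=
  dotProduct_smul c u x

lemma dotp_sum {ι : Type*} (u : Fin n → ℝ) (f : ι → Fin n → ℝ) (t : Finset ι) :
    dotp u (∑ i ∈ t, f i) = ∑ i ∈ t, dotp u (f i) :=
  dotProduct_sum u t f

lemma dotp_sub (u x y : Fin n → ℝ) : dotp u (x - y) = dotp u x - dotp u y :=
  dotProduct_sub u x y

lemma continuous_dotp (w : Fin n → ℝ) : Continuous (dotp w) := by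
  unfold dotp; fun_prop

lemma dotp_sub_sum_smul {ι : Type*} [Fintype ι] (w x : Fin n → ℝ) (y : ι → ℝ)
    (b : ι → Fin n → ℝ) : dotp w (x - ∑ l, y l • b l) = dotp w x - ∑ l, dotp w (b l) * y l := by
  simp only [dotp_sub, dotp_sum, dotp_smul, mul_comm (y _)]

lemma mul_self_eq_one_of_pm_one {σ : ℝ} (hσ : σ = -1 ∨ σ = 1) : σ * σ = 1 := by
  rcases hσ with rfl | rfl <;> norm_num

lemma dotp_sum_smul (hvon : ∀ j j', dotp (v j) (v j') = if j = j' then 1 else 0)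
    (c : Fin n → ℝ) (j : Fin n) : dotp (v j) (∑ j', c j' • v j') = c j := by
  simp only [dotp_eq_dotProduct, dotProduct_sum, dotProduct_smul] at hvon ⊢
  simp [hvon]

lemma sum_dotp_smul (hvon : ∀ j j', dotp (v j) (v j') = if j = j' then 1 else 0)
    (hvspan : Submodule.span ℝ (Set.range v) = ⊤) (x : Fin n → ℝ) :
    ∑ j, dotp (v j) x • v j = x := by
  obtain ⟨c, rfl⟩ := (Submodule.mem_span_range_iff_exists_fun ℝ).1
    (hvspan ▸ Submodule.mem_top : x ∈ Submodule.span ℝ (Set.range v))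
  simp only [dotp_sum_smul hvon]

lemma dotp_sum_smul_smul (hvon : ∀ j j', dotp (v j) (v j') = if j = j' then 1 else 0)
    (a s : Fin n → ℝ) (j : Fin n) : dotp (v j) (∑ j', a j' • s j' • v j') = a j * s j := by
  simp only [smul_smul, dotp_sum_smul hvon]

lemma signed_dotp_sum_smul (hvon : ∀ j j', dotp (v j) (v j') = if j = j' then 1 else 0)
    {s : Fin n → ℝ} (hs : ∀ j, s j = -1 ∨ s j = 1) (a : Fin n → ℝ) (j : Fin n) :
    s j * dotp (v j) (∑ j', a j' • s j' • v j') = a j := by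
  rw [dotp_sum_smul_smul hvon]
  linear_combination a j * mul_self_eq_one_of_pm_one (hs j)

lemma mem_Kcone_iff (hvon : ∀ j j', dotp (v j) (v j') = if j = j' then 1 else 0)
    (hvspan : Submodule.span ℝ (Set.range v) = ⊤) {t : Fin n → ℝ} (ht : ∀ j, t j = -1 ∨ t j = 1)
    {x : Fin n → ℝ} : x ∈ Kcone v t ↔ ∀ j, 0 ≤ t j * dotp (v j) x := by
  constructor
  · rintro ⟨lam, hlam, rfl⟩ j
    rw [signed_dotp_sum_smul hvon ht]
    exact hlam j
  · intro hx
    refine ⟨fun j => t j * dotp (v j) x, hx, ?_⟩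
    conv_lhs => rw [← sum_dotp_smul hvon hvspan x]
    refine Finset.sum_congr rfl fun j _ => ?_
    rw [smul_smul]
    congr 1
    linear_combination -dotp (v j) x * mul_self_eq_one_of_pm_one (ht j)

lemma zero_mem_Kcone (t : Fin n → ℝ) : (0 : Fin n → ℝ) ∈ Kcone v t :=
  ⟨0, fun _ => le_rfl, by simp⟩

lemma convex_Kcone (t : Fin n → ℝ) : Convex ℝ (Kcone v t) := by
  rintro _ ⟨lam, hlam, rfl⟩ _ ⟨mu, hmu, rfl⟩ α β hα hβ _
  refine ⟨α • lam + β • mu, fun j => ?_, ?_⟩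
  · simp only [Pi.add_apply, Pi.smul_apply, smul_eq_mul]
    have := hlam j; have := hmu j; positivity
  · simp only [Finset.smul_sum, smul_smul, ← Finset.sum_add_distrib]
    refine Finset.sum_congr rfl fun j _ => ?_
    rw [← add_smul]
    simp only [Pi.add_apply, Pi.smul_apply, smul_eq_mul]
    ring_nf

lemma dotp_eq_zero_of_mem_span (hvon : ∀ j j', dotp (v j) (v j') = if j = j' then 1 else 0)
    {J : Set (Fin n)} {j : Fin n} (hj : j ∉ J) {e : Fin n → ℝ}
    (he : e ∈ Submodule.span ℝ (v '' J)) : dotp (v j) e = 0 := by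
  have : Submodule.span ℝ (v '' J) ≤ LinearMap.ker (dotProductBilin ℝ ℝ (v j)) := by
    rw [Submodule.span_le]
    rintro _ ⟨j', hj', rfl⟩
    have : j ≠ j' := fun h => hj (h ▸ hj')
    simp [← dotp_eq_dotProduct, hvon, this]
  simpa [dotp_eq_dotProduct] using this he

end Coordinates

section Cayley

variable {n k : ℕ}

lemma CayleyQ_eq {C : Fin k → Set (Fin n → ℝ)} (hC : ∀ i, Convex ℝ (C i))
    (hne : ∀ i, (C i).Nonempty) :
    CayleyQ C = {p | p.2 ∈ stdSimplex ℝ (Fin k) ∧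
      p.1 ∈ (fun w : Fin k → Fin n → ℝ => ∑ i, p.2 i • w i) '' univ.pi C} := by
  classical
  apply Subset.antisymm
  · refine convexHull_min ?_ ?_
    · rintro ⟨x, y⟩ hp
      obtain ⟨i, hx, rfl⟩ : ∃ i, x ∈ C i ∧ y = Pi.single i 1 := by simpa using hp
      choose c hc using hne
      refine ⟨single_mem_stdSimplex ℝ i, Function.update c i x, fun l _ => ?_, ?_⟩
      · rcases eq_or_ne l i with rfl | hl <;> simp [*]
      · simp [Pi.single_apply]
    · rintro ⟨x₁, y₁⟩ ⟨hy₁, w₁, hw₁, hx₁⟩ ⟨x₂, y₂⟩ ⟨hy₂, w₂, hw₂, hx₂⟩ α β hα hβ hαβ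
      dsimp only at hy₁ hy₂ hx₁ hx₂
      subst hx₁ hx₂
      have := fun i => (hC i).exists_mem_add_smul_eq (hw₁ i trivial) (hw₂ i trivial)
        (mul_nonneg hα (hy₁.1 i)) (mul_nonneg hβ (hy₂.1 i))
      choose w hw hwe using this
      refine ⟨convex_stdSimplex ℝ (Fin k) hy₁ hy₂ hα hβ hαβ, w, fun i _ => hw i, ?_⟩
      simp only [Prod.smul_mk, Prod.mk_add_mk, Pi.add_apply, Pi.smul_apply, smul_eq_mul, hwe,
        Finset.smul_sum, smul_smul, Finset.sum_add_distrib]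
  · rintro ⟨x, y⟩ ⟨hy, w, hw, hx⟩
    dsimp only at hy hx
    subst hx
    have hrep : ((∑ i, y i • w i, y) : (Fin n → ℝ) × (Fin k → ℝ))
        = ∑ i, y i • ((w i, Pi.single i 1) : (Fin n → ℝ) × (Fin k → ℝ)) := by
      ext <;> simp [Prod.fst_sum, Prod.snd_sum, Pi.single_apply]
    rw [CayleyQ, hrep]
    refine (convex_convexHull ℝ _).sum_mem (fun i _ => hy.1 i) hy.2 fun i _ => ?_
    exact subset_convexHull ℝ _ (mem_iUnion.2 ⟨i, mk_mem_prod (hw i trivial) rfl⟩)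

end Cayley

section SupportFunction

variable {n : ℕ}

-- A maximum only for compact nonempty `D`; `sSup ∅ = 0` otherwise.
def supportFn (D : Set (Fin n → ℝ)) (w : Fin n → ℝ) : ℝ :=
  sSup ((fun d => dotp w d) '' D)

variable {D : Set (Fin n → ℝ)}

lemma isGreatest_supportFn (hD : IsCompact D) (hne : D.Nonempty) (w : Fin n → ℝ) :
    IsGreatest ((fun d => dotp w d) '' D) (supportFn D w) :=
  (hD.image (continuous_dotp w)).isGreatest_sSup (hne.image _)

lemma dotp_le_supportFn (hD : IsCompact D) {d : Fin n → ℝ} (hd : d ∈ D) (w : Fin n → ℝ) :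
    dotp w d ≤ supportFn D w :=
  (isGreatest_supportFn hD ⟨d, hd⟩ w).2 ⟨d, hd, rfl⟩

lemma isGreatest_image_add_singleton (hD : IsCompact D) (hne : D.Nonempty) (w b : Fin n → ℝ) :
    IsGreatest ((fun x => dotp w x) '' (D + {b})) (dotp w b + supportFn D w) := by
  have himage :
      (fun x => dotp w x) '' (D + {b}) = (dotp w b + ·) '' ((fun d => dotp w d) '' D) := by
    simp only [add_singleton, image_image, dotp_eq_dotProduct, dotProduct_add, add_comm]
  rw [himage]
  exact (monotone_id.const_add _).map_isGreatest (isGreatest_supportFn hD hne w)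

lemma isLeast_image_add_singleton (hD : IsCompact D) (hne : D.Nonempty) (w b : Fin n → ℝ) :
    IsLeast ((fun x => dotp w x) '' (D + {b})) (dotp w b - supportFn D (-w)) := by
  have h := (monotone_id (α := ℝ)).neg.map_isGreatest (isGreatest_image_add_singleton hD hne (-w) b)
  simpa [image_image, dotp_eq_dotProduct, sub_eq_add_neg, add_comm] using h

end SupportFunction

lemma mem_of_forall_exists_sub_mem_Kcone {n : ℕ} {v : Fin n → Fin n → ℝ} {S : Set (Fin n → ℝ)}
    (hS : Convex ℝ S) (hSc : IsClosed S) {x : Fin n → ℝ}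
    (h : ∀ t : Fin n → ℝ, (∀ j, t j = -1 ∨ t j = 1) → ∃ p ∈ S, x - p ∈ Kcone v t) : x ∈ S := by
  by_contra hx
  obtain ⟨f, r, hfS, hfx⟩ := geometric_hahn_banach_closed_point hS hSc hx
  -- choose the orthant on which `f` is nonpositive
  obtain ⟨p, hp, lam, hlam, hxp⟩ := h (fun j => if f (v j) ≤ 0 then 1 else -1) fun j => by
    split_ifs <;> simp
  have hterm : ∀ j, f (lam j • (if f (v j) ≤ 0 then 1 else -1 : ℝ) • v j) ≤ 0 := fun j => by
    simp only [map_smul, smul_eq_mul]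
    split_ifs <;> nlinarith [hlam j]
  have : f x ≤ f p := by
    rw [← sub_add_cancel x p, map_add, hxp, map_sum]
    linarith [Finset.sum_nonpos fun j (_ : j ∈ Finset.univ) => hterm j]
  linarith [hfS p hp]

section SignedSets

variable {n : ℕ} {v : Fin n → Fin n → ℝ} {s : Fin n → ℝ} {D : Set (Fin n → ℝ)}

lemma supportFn_nonneg (hD : IsCompact D) (h0 : 0 ∈ D) (w : Fin n → ℝ) : 0 ≤ supportFn D w :=
  (isGreatest_supportFn hD ⟨0, h0⟩ w).2 ⟨0, h0, by simp [dotp]⟩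

lemma supportFn_neg_sign_smul (hvon : ∀ j j', dotp (v j) (v j') = if j = j' then 1 else 0)
    (hvspan : Submodule.span ℝ (Set.range v) = ⊤) (hs : ∀ j, s j = -1 ∨ s j = 1)
    (hDK : D ⊆ Kcone v s) (hD : IsCompact D) (h0 : 0 ∈ D) (j : Fin n) :
    supportFn D (-s j • v j) = 0 := by
  refine le_antisymm ?_ (supportFn_nonneg hD h0 _)
  obtain ⟨d, hd, hde⟩ := (isGreatest_supportFn hD ⟨0, h0⟩ (-s j • v j)).1
  simp only [← hde, dotp_smul_left, neg_mul, neg_nonpos]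
  exact (mem_Kcone_iff hvon hvspan hs).1 (hDK hd) j

lemma sum_smul_mem_smul_of_le (hvon : ∀ j j', dotp (v j) (v j') = if j = j' then 1 else 0)
    (hvspan : Submodule.span ℝ (Set.range v) = ⊤) (hs : ∀ j, s j = -1 ∨ s j = 1)
    (hdown : (D - Kcone v s) ∩ Kcone v s = D) {c : ℝ} (hc : 0 < c) {d : Fin n → ℝ} (hd : d ∈ D)
    {a : Fin n → ℝ} (ha0 : ∀ j, 0 ≤ a j) (ha : ∀ j, a j ≤ c * (s j * dotp (v j) d)) :
    ∑ j, a j • s j • v j ∈ c • D := by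
  set e := ∑ j, (c⁻¹ * a j) • s j • v j
  have heK : e ∈ Kcone v s := ⟨_, fun j => mul_nonneg (inv_nonneg.2 hc.le) (ha0 j), rfl⟩
  have hdeK : d - e ∈ Kcone v s := by
    refine (mem_Kcone_iff hvon hvspan hs).2 fun j => ?_
    rw [dotp_sub, mul_sub, signed_dotp_sum_smul hvon hs, sub_nonneg, inv_mul_le_iff₀ hc]
    exact ha j
  have he : e ∈ D := hdown ▸ ⟨⟨d, hd, d - e, hdeK, sub_sub_cancel d e⟩, heK⟩
  refine ⟨e, he, ?_⟩
  simp only [e, Finset.smul_sum, smul_smul, ← mul_assoc, mul_inv_cancel₀ hc.ne', one_mul]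

lemma mem_of_supportFn_neg_smul_pos (hvon : ∀ j j', dotp (v j) (v j') = if j = j' then 1 else 0)
    (hvspan : Submodule.span ℝ (Set.range v) = ⊤) {t : Fin n → ℝ} (ht : ∀ j, t j = -1 ∨ t j = 1)
    (hD : IsCompact D) (hne : D.Nonempty) {J : Set (Fin n)}
    (hJ : D + Kcone v t = (D ∩ (Submodule.span ℝ (v '' J) : Set (Fin n → ℝ))) + Kcone v t)
    {j : Fin n} (hpos : 0 < supportFn D (-t j • v j)) : j ∈ J := by
  by_contra hj
  obtain ⟨d, hd, hde⟩ := (isGreatest_supportFn hD hne (-t j • v j)).1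
  obtain ⟨e, ⟨-, he⟩, κ, hκ, rfl⟩ :
      d ∈ (D ∩ (Submodule.span ℝ (v '' J) : Set (Fin n → ℝ))) + Kcone v t :=
    hJ ▸ ⟨d, hd, 0, zero_mem_Kcone t, add_zero d⟩
  have := (mem_Kcone_iff hvon hvspan ht).1 hκ j
  simp only [← hde, dotp_smul_left, dotp_add, dotp_eq_zero_of_mem_span hvon hj he] at hpos
  linarith

end SignedSets

lemma signed_residual_nonneg {ι : Type*} [Fintype ι] [DecidableEq ι] {y s : ι → ℝ}
    {M : ι → ℝ → ℝ} {Q : ι → Prop} [DecidablePred Q] {u t : ℝ}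
    (hy : ∀ l, 0 ≤ y l) (hM : ∀ l σ, 0 ≤ M l σ) (hs : ∀ l, s l = -1 ∨ s l = 1)
    (ht : t = -1 ∨ t = 1) (hMs : ∀ l, M l (-s l) = 0) (hbnd : -t * u ≤ ∑ l, M l (-t) * y l)
    (hQ : ∀ l, 0 < y l → 0 < M l (-t) → Q l) (hQuniq : ∀ l l', Q l → Q l' → l = l') :
    0 ≤ t * (u - ∑ i, if Q i then
      max 0 (s i * u - ∑ l, (if i = l then 0 else M l (s i)) * y l) * s i else 0) := by
  have hQ_of_neg : t * u < 0 → ∃ l, Q l ∧ 0 < M l (-t) := fun htu => by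
    obtain ⟨l, -, hl⟩ := Finset.exists_lt_of_sum_lt (s := Finset.univ) (f := 0)
      (g := fun l => M l (-t) * y l) (by simp only [Pi.zero_apply, Finset.sum_const_zero]; linarith)
    have hMl := pos_of_mul_pos_left hl (hy l)
    have hyl := pos_of_mul_pos_right hl (hM l _)
    exact ⟨l, hQ l hyl hMl, hMl⟩
  by_cases hex : ∃ i, Q i
  · obtain ⟨i, hi⟩ := hex
    rw [Finset.sum_eq_single i (fun l _ hl => if_neg fun hQl => hl (hQuniq l i hQl hi))
      (by simp), if_pos hi]
    set r := ∑ l, (if i = l then 0 else M l (s i)) * y l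
    have hsi := mul_self_eq_one_of_pm_one (hs i)
    obtain hts | hts : t = s i ∨ t = -s i := by
      rcases ht with rfl | rfl <;> rcases hs i with h | h <;> norm_num [h]
    · have htu : 0 ≤ t * u := by
        by_contra! htu
        obtain ⟨l, hl, hMl⟩ := hQ_of_neg htu
        rw [hQuniq l i hl hi, hts, hMs] at hMl
        exact hMl.false
      have hr : 0 ≤ r := Finset.sum_nonneg fun l _ => by
        split_ifs
        · simp
        · exact mul_nonneg (hM l _) (hy l)
      have : max 0 (s i * u - r) ≤ t * u := max_le htu (by rw [← hts]; linarith)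
      subst hts
      linear_combination this + max 0 (s i * u - r) * hsi
    · have hr : r = 0 := Finset.sum_eq_zero fun l _ => by
        split_ifs with hil
        · simp
        · by_contra hne
          have hl := (mul_nonneg (hM l _) (hy l)).lt_of_ne' hne
          have hMl := pos_of_mul_pos_left hl (hy l)
          have hyl := pos_of_mul_pos_right hl (hM l _)
          rw [← neg_neg (s i), ← hts] at hMl
          exact hil (hQuniq i l hi (hQ l hyl hMl))
      have : s i * u ≤ max 0 (s i * u - r) := by rw [hr, sub_zero]; exact le_max_right _ _
      subst hts
      linear_combination this - max 0 (s i * u - r) * hsi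
  · push Not at hex
    rw [Finset.sum_eq_zero fun i _ => if_neg (hex i), sub_zero]
    by_contra! htu
    obtain ⟨l, hl, -⟩ := hQ_of_neg htu
    exact hex l hl

section Family

variable {n k : ℕ} {v : Fin n → Fin n → ℝ} {s : Fin k → Fin n → ℝ}
  {D : Fin k → Set (Fin n → ℝ)} {y : Fin k → ℝ}

/-- The coefficient of `s i j • v j` in the vector `zⁱ` of the theorem, for the translate
`u = x - ∑ₗ yₗ bˡ` of `x`. -/
def excessCoeff (v : Fin n → Fin n → ℝ) (s : Fin k → Fin n → ℝ) (D : Fin k → Set (Fin n → ℝ))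
    (y : Fin k → ℝ) (u : Fin n → ℝ) (i : Fin k) (j : Fin n) : ℝ :=
  max 0 (s i j * dotp (v j) u -
    ∑ l, (if i = l then 0 else supportFn (D l) (s i j • v j)) * y l)

lemma exists_mem_sub_mem_Kcone (hvon : ∀ j j', dotp (v j) (v j') = if j = j' then 1 else 0)
    (hvspan : Submodule.span ℝ (Set.range v) = ⊤) (hs : ∀ i j, s i j = -1 ∨ s i j = 1)
    (hD : ∀ i, IsCompact (D i)) (hD0 : ∀ i, (0 : Fin n → ℝ) ∈ D i)
    (hDK : ∀ i, D i ⊆ Kcone v (s i)) (hdown : ∀ i, (D i - Kcone v (s i)) ∩ Kcone v (s i) = D i)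
    {t : Fin n → ℝ} (ht : ∀ j, t j = -1 ∨ t j = 1) {J : Fin k → Set (Fin n)}
    (hJdisj : ∀ i i', i ≠ i' → Disjoint (J i) (J i'))
    (hJ : ∀ i, D i + Kcone v t =
      (D i ∩ (Submodule.span ℝ (v '' J i) : Set (Fin n → ℝ))) + Kcone v t)
    (hy : ∀ i, 0 ≤ y i) {u : Fin n → ℝ}
    (hbnd : ∀ j, -t j * dotp (v j) u ≤ ∑ l, supportFn (D l) (-t j • v j) * y l)
    (hz : ∀ i, 0 < y i → ∑ j, excessCoeff v s D y u i j • s i j • v j ∈ y i • D i) :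
    ∃ d : Fin k → Fin n → ℝ, (∀ i, d i ∈ D i) ∧ u - ∑ i, y i • d i ∈ Kcone v t := by
  classical
  -- `dⁱ` keeps only the coordinates `j ∈ Jⁱ` of `zⁱ / yᵢ`
  have hpart : ∀ i, ∃ d ∈ D i, y i • d =
      ∑ j, (if 0 < y i ∧ j ∈ J i then excessCoeff v s D y u i j else 0) • s i j • v j := by
    intro i
    by_cases hyi : 0 < y i
    · obtain ⟨g, hg, hgz⟩ := hz i hyi
      simp only [hyi, true_and]
      refine sum_smul_mem_smul_of_le hvon hvspan (hs i) (hdown i) hyi hg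
        (fun j => by split_ifs <;> simp [excessCoeff]) fun j => ?_
      have := congrArg (fun z => s i j * dotp (v j) z) hgz
      simp only [dotp_smul, signed_dotp_sum_smul hvon (hs i)] at this
      rw [mul_left_comm, this]
      split_ifs
      · exact le_rfl
      · exact le_max_left _ _
    · exact ⟨0, hD0 i, by simp [hyi]⟩
  choose d hd hdy using hpart
  refine ⟨d, hd, (mem_Kcone_iff hvon hvspan ht).2 fun j => ?_⟩
  have hcoord : dotp (v j) (u - ∑ i, y i • d i) = dotp (v j) u -
      ∑ i, if 0 < y i ∧ j ∈ J i then excessCoeff v s D y u i j * s i j else 0 := by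
    simp only [dotp_sub, dotp_sum, hdy, dotp_sum_smul_smul hvon, ite_mul, zero_mul]
  rw [hcoord]
  refine signed_residual_nonneg (M := fun l σ => supportFn (D l) (σ • v j)) hy
    (fun l _ => supportFn_nonneg (hD l) (hD0 l) _) (fun l => hs l j) (ht j)
    (fun l => supportFn_neg_sign_smul hvon hvspan (hs l) (hDK l) (hD l) (hD0 l) j) (hbnd j)
    (fun l hyl hl => ⟨hyl, mem_of_supportFn_neg_smul_pos hvon hvspan ht (hD l) ⟨0, hD0 l⟩
      (hJ l) hl⟩) fun l l' hl hl' => ?_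
  by_contra hne
  exact Set.disjoint_left.1 (hJdisj l l' hne) hl.2 hl'.2

lemma dotp_sum_smul_le_sum_supportFn (hD : ∀ i, IsCompact (D i)) (hy : ∀ i, 0 ≤ y i)
    {d : Fin k → Fin n → ℝ} (hd : ∀ i, d i ∈ D i) (w : Fin n → ℝ) :
    dotp w (∑ i, y i • d i) ≤ ∑ i, supportFn (D i) w * y i := by
  rw [dotp_sum]
  refine Finset.sum_le_sum fun i _ => ?_
  rw [dotp_smul, mul_comm]
  exact mul_le_mul_of_nonneg_right (dotp_le_supportFn (hD i) (hd i) w) (hy i)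

lemma excessCoeff_le (hvon : ∀ j j', dotp (v j) (v j') = if j = j' then 1 else 0)
    (hvspan : Submodule.span ℝ (Set.range v) = ⊤) (hs : ∀ i j, s i j = -1 ∨ s i j = 1)
    (hD : ∀ i, IsCompact (D i)) (hDK : ∀ i, D i ⊆ Kcone v (s i)) (hy : ∀ i, 0 ≤ y i)
    {d : Fin k → Fin n → ℝ} (hd : ∀ i, d i ∈ D i) (i : Fin k) (j : Fin n) :
    excessCoeff v s D y (∑ l, y l • d l) i j ≤ y i * (s i j * dotp (v j) (d i)) := by
  classical
  refine max_le (mul_nonneg (hy i) ((mem_Kcone_iff hvon hvspan (hs i)).1 (hDK i (hd i)) j)) ?_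
  have hterm : ∀ l, y l * dotp (s i j • v j) (d l) -
      (if i = l then 0 else supportFn (D l) (s i j • v j)) * y l ≤
      if i = l then y i * (s i j * dotp (v j) (d i)) else 0 := fun l => by
    split_ifs with hil
    · subst hil; rw [dotp_smul_left]; simp
    · nlinarith [dotp_le_supportFn (hD l) (hd l) (s i j • v j), hy l]
  calc s i j * dotp (v j) (∑ l, y l • d l) -
        ∑ l, (if i = l then 0 else supportFn (D l) (s i j • v j)) * y l
      = ∑ l, (y l * dotp (s i j • v j) (d l) -
          (if i = l then 0 else supportFn (D l) (s i j • v j)) * y l) := by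
        rw [dotp_sum, Finset.mul_sum, Finset.sum_sub_distrib]
        congr 1
        refine Finset.sum_congr rfl fun l _ => ?_
        rw [dotp_smul, dotp_smul_left]
        ring
    _ ≤ y i * (s i j * dotp (v j) (d i)) := by
        simpa using Finset.sum_le_sum fun l (_ : l ∈ Finset.univ) => hterm l

lemma sum_excessCoeff_smul_mem_smul (hvon : ∀ j j', dotp (v j) (v j') = if j = j' then 1 else 0)
    (hvspan : Submodule.span ℝ (Set.range v) = ⊤) (hs : ∀ i j, s i j = -1 ∨ s i j = 1)
    (hD : ∀ i, IsCompact (D i)) (hDK : ∀ i, D i ⊆ Kcone v (s i))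
    (hdown : ∀ i, (D i - Kcone v (s i)) ∩ Kcone v (s i) = D i) (hy : ∀ i, 0 ≤ y i)
    {d : Fin k → Fin n → ℝ} (hd : ∀ i, d i ∈ D i) {i : Fin k} (hyi : 0 < y i) :
    ∑ j, excessCoeff v s D y (∑ l, y l • d l) i j • s i j • v j ∈ y i • D i :=
  sum_smul_mem_smul_of_le hvon hvspan (hs i) (hdown i) hyi (hd i) (fun _ => le_max_left _ _)
    (excessCoeff_le hvon hvspan hs hD hDK hy hd i)

lemma excessCoeff_eq_zero (hvon : ∀ j j', dotp (v j) (v j') = if j = j' then 1 else 0)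
    (hvspan : Submodule.span ℝ (Set.range v) = ⊤) (hs : ∀ i j, s i j = -1 ∨ s i j = 1)
    (hD : ∀ i, IsCompact (D i)) (hDK : ∀ i, D i ⊆ Kcone v (s i)) (hy : ∀ i, 0 ≤ y i)
    {d : Fin k → Fin n → ℝ} (hd : ∀ i, d i ∈ D i) {i : Fin k} (hyi : y i = 0) (j : Fin n) :
    excessCoeff v s D y (∑ l, y l • d l) i j = 0 :=
  le_antisymm (by simpa [hyi] using excessCoeff_le hvon hvspan hs hD hDK hy hd i j)
    (le_max_left _ _)

lemma mem_image_pi_of_constraints (hvon : ∀ j j', dotp (v j) (v j') = if j = j' then 1 else 0)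
    (hvspan : Submodule.span ℝ (Set.range v) = ⊤) (hs : ∀ i j, s i j = -1 ∨ s i j = 1)
    (hD : ∀ i, IsCompact (D i)) (hDconv : ∀ i, Convex ℝ (D i)) (hD0 : ∀ i, (0 : Fin n → ℝ) ∈ D i)
    (hDK : ∀ i, D i ⊆ Kcone v (s i)) (hdown : ∀ i, (D i - Kcone v (s i)) ∩ Kcone v (s i) = D i)
    (h2 : ∀ t : Fin n → ℝ, (∀ j, t j = -1 ∨ t j = 1) →
      ∃ J : Fin k → Set (Fin n), (∀ i i', i ≠ i' → Disjoint (J i) (J i')) ∧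
        ∀ i, D i + Kcone v t =
          (D i ∩ (Submodule.span ℝ (v '' J i) : Set (Fin n → ℝ))) + Kcone v t)
    (hy : ∀ i, 0 ≤ y i) {u : Fin n → ℝ}
    (hbnd : ∀ j, -dotp (v j) u ≤ ∑ l, supportFn (D l) (-v j) * y l ∧
      dotp (v j) u ≤ ∑ l, supportFn (D l) (v j) * y l)
    (hz : ∀ i, 0 < y i → ∑ j, excessCoeff v s D y u i j • s i j • v j ∈ y i • D i) :
    u ∈ (fun d : Fin k → Fin n → ℝ => ∑ i, y i • d i) '' univ.pi D := by
  have hlin : (fun d : Fin k → Fin n → ℝ => ∑ i, y i • d i) =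
      ⇑(∑ i, y i • LinearMap.proj (R := ℝ) (φ := fun _ : Fin k => Fin n → ℝ) i) := by
    ext; simp
  refine mem_of_forall_exists_sub_mem_Kcone (v := v)
    (hlin ▸ (convex_pi fun i _ => hDconv i).linear_image _)
    ((isCompact_univ_pi hD).image (by fun_prop)).isClosed fun t ht => ?_
  obtain ⟨J, hJdisj, hJ⟩ := h2 t ht
  have hbnd' : ∀ j, -t j * dotp (v j) u ≤ ∑ l, supportFn (D l) (-t j • v j) * y l := fun j => by
    rcases ht j with h | h <;> simp [h, hbnd j]
  obtain ⟨d, hd, hdK⟩ :=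
    exists_mem_sub_mem_Kcone hvon hvspan hs hD hD0 hDK hdown ht hJdisj hJ hy hbnd' hz
  exact ⟨_, ⟨d, fun i _ => hd i, rfl⟩, hdK⟩

end Family

section Translate

variable {n k : ℕ} {v : Fin n → Fin n → ℝ} {s : Fin k → Fin n → ℝ}
  {D : Fin k → Set (Fin n → ℝ)} {y : Fin k → ℝ}

lemma mem_image_pi_add_singleton_iff (b : Fin k → Fin n → ℝ) (x : Fin n → ℝ) :
    x ∈ (fun w : Fin k → Fin n → ℝ => ∑ i, y i • w i) '' univ.pi (fun i => D i + {b i}) ↔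
      x - ∑ i, y i • b i ∈ (fun d : Fin k → Fin n → ℝ => ∑ i, y i • d i) '' univ.pi D := by
  simp only [mem_image, mem_univ_pi, add_singleton, mem_image]
  constructor
  · rintro ⟨w, hw, rfl⟩
    choose d hd hdw using hw
    refine ⟨d, hd, ?_⟩
    simp only [← hdw, smul_add, Finset.sum_add_distrib, add_sub_cancel_right]
  · rintro ⟨d, hd, hdx⟩
    refine ⟨fun i => d i + b i, fun i => ⟨d i, hd i, rfl⟩, ?_⟩
    simp only [smul_add, Finset.sum_add_distrib, hdx, sub_add_cancel]

lemma smul_mem_smul_inter_Kcone_iff {G : Set (Fin n → ℝ)} {t : Fin n → ℝ} {c : ℝ} (hc : 0 < c)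
    {z : Fin n → ℝ} (hz : z ∈ Kcone v t) : z ∈ c • (G ∩ Kcone v t) ↔ z ∈ c • G := by
  refine ⟨fun h => smul_set_mono inter_subset_left h, fun ⟨g, hg, hgz⟩ => ⟨g, ⟨hg, ?_⟩, hgz⟩⟩
  obtain ⟨lam, hlam, rfl⟩ := hz
  refine ⟨c⁻¹ • lam, fun j => mul_nonneg (inv_nonneg.2 hc.le) (hlam j), ?_⟩
  rw [← inv_smul_smul₀ hc.ne' g, show c • g = _ from hgz, Finset.smul_sum]
  simp only [Pi.smul_apply, smul_smul, smul_eq_mul, mul_assoc]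

lemma zero_mem_recCone {E : Type*} [AddCommGroup E] [Module ℝ E] (S : Set E) :
    (0 : E) ∈ recCone S := fun x hx t _ => by simpa using hx

lemma max_sub_sum_eq_excessCoeff (b : Fin k → Fin n → ℝ) (x : Fin n → ℝ) (i : Fin k)
    (j : Fin n) : max 0 (dotp (s i j • v j) x - ∑ l, (dotp (s i j • v j) (b l) +
      if i = l then 0 else supportFn (D l) (s i j • v j)) * y l) =
      excessCoeff v s D y (x - ∑ l, y l • b l) i j := by
  simp only [excessCoeff, dotp_sub_sum_smul, add_mul, Finset.sum_add_distrib, dotp_smul_left,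
    Finset.mul_sum, mul_assoc, mul_sub]
  ring_nf

lemma mem_image_pi_iff_constraints (hvon : ∀ j j', dotp (v j) (v j') = if j = j' then 1 else 0)
    (hvspan : Submodule.span ℝ (Set.range v) = ⊤) (hs : ∀ i j, s i j = -1 ∨ s i j = 1)
    {G : Fin k → Set (Fin n → ℝ)} (hDG : ∀ i, D i = G i ∩ Kcone v (s i))
    (hD : ∀ i, IsCompact (D i)) (hDconv : ∀ i, Convex ℝ (D i)) (hD0 : ∀ i, (0 : Fin n → ℝ) ∈ D i)
    (hdown : ∀ i, (D i - Kcone v (s i)) ∩ Kcone v (s i) = D i)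
    (h2 : ∀ t : Fin n → ℝ, (∀ j, t j = -1 ∨ t j = 1) →
      ∃ J : Fin k → Set (Fin n), (∀ i i', i ≠ i' → Disjoint (J i) (J i')) ∧
        ∀ i, D i + Kcone v t =
          (D i ∩ (Submodule.span ℝ (v '' J i) : Set (Fin n → ℝ))) + Kcone v t)
    (hy : ∀ i, 0 ≤ y i) (b : Fin k → Fin n → ℝ) (x : Fin n → ℝ) :
    x ∈ (fun w : Fin k → Fin n → ℝ => ∑ i, y i • w i) '' univ.pi (fun i => D i + {b i}) ↔
      (∀ j, ∑ i, (dotp (v j) (b i) - supportFn (D i) (-v j)) * y i ≤ dotp (v j) x ∧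
        dotp (v j) x ≤ ∑ i, (dotp (v j) (b i) + supportFn (D i) (v j)) * y i) ∧
      ∀ i,
        (0 < y i → (∑ j, max 0 (dotp (s i j • v j) x - ∑ l, (dotp (s i j • v j) (b l) +
          if i = l then 0 else supportFn (D l) (s i j • v j)) * y l) • (s i j • v j)) ∈ y i • G i) ∧
        (y i = 0 → (∑ j, max 0 (dotp (s i j • v j) x - ∑ l, (dotp (s i j • v j) (b l) +
          if i = l then 0 else supportFn (D l) (s i j • v j)) * y l) • (s i j • v j))
            ∈ recCone (G i)) := by
  have hDK : ∀ i, D i ⊆ Kcone v (s i) := fun i => hDG i ▸ inter_subset_right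
  rw [mem_image_pi_add_singleton_iff]
  have hbnd : ∀ j, (∑ i, (dotp (v j) (b i) - supportFn (D i) (-v j)) * y i ≤ dotp (v j) x ∧
      dotp (v j) x ≤ ∑ i, (dotp (v j) (b i) + supportFn (D i) (v j)) * y i) ↔
      (-dotp (v j) (x - ∑ l, y l • b l) ≤ ∑ l, supportFn (D l) (-v j) * y l ∧
        dotp (v j) (x - ∑ l, y l • b l) ≤ ∑ l, supportFn (D l) (v j) * y l) := fun j => by
    simp only [dotp_sub_sum_smul, sub_mul, add_mul, Finset.sum_sub_distrib, Finset.sum_add_distrib]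
    constructor <;> rintro ⟨h₁, h₂⟩ <;> constructor <;> linarith
  simp only [max_sub_sum_eq_excessCoeff, hbnd]
  generalize x - ∑ l, y l • b l = u
  have hzK : ∀ i, ∑ j, excessCoeff v s D y u i j • s i j • v j ∈ Kcone v (s i) :=
    fun i => ⟨_, fun j => le_max_left _ _, rfl⟩
  constructor
  · rintro ⟨d, hd, hdu⟩
    rw [mem_univ_pi] at hd
    subst hdu
    refine ⟨fun j => ⟨?_, dotp_sum_smul_le_sum_supportFn hD hy hd (v j)⟩, fun i => ⟨fun hyi => ?_,
      fun hyi => ?_⟩⟩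
    · simpa [dotp_eq_dotProduct] using dotp_sum_smul_le_sum_supportFn hD hy hd (-v j)
    · rw [← smul_mem_smul_inter_Kcone_iff hyi (hzK i), ← hDG]
      exact sum_excessCoeff_smul_mem_smul hvon hvspan hs hD hDK hdown hy hd hyi
    · simpa [excessCoeff_eq_zero hvon hvspan hs hD hDK hy hd hyi] using zero_mem_recCone (G i)
  · rintro ⟨hbnd, hz⟩
    refine mem_image_pi_of_constraints hvon hvspan hs hD hDconv hD0 hDK hdown h2 hy hbnd
      fun i hyi => ?_
    rw [hDG, smul_mem_smul_inter_Kcone_iff hyi (hzK i)]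
    exact (hz i).1 hyi

end Translate

theorem stmt12_general {n k : ℕ}
    (v : Fin n → Fin n → ℝ)
    (hvon : ∀ j j', dotp (v j) (v j') = if j = j' then 1 else 0)
    (hvspan : Submodule.span ℝ (Set.range v) = ⊤)
    (G : Fin k → Set (Fin n → ℝ))
    (hGconv : ∀ i, Convex ℝ (G i)) (hG0 : ∀ i, (0 : Fin n → ℝ) ∈ G i)
    (s : Fin k → Fin n → ℝ) (hs : ∀ i j, s i j = -1 ∨ s i j = 1)
    (D : Fin k → Set (Fin n → ℝ)) (hDdef : ∀ i, D i = G i ∩ Kcone v (s i))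
    (h1 : ∀ i, (D i - Kcone v (s i)) ∩ Kcone v (s i) = D i ∧ IsCompact (D i))
    (h2 : ∀ t : Fin n → ℝ, (∀ j, t j = -1 ∨ t j = 1) →
      ∃ J : Fin k → Set (Fin n), (∀ i i', i ≠ i' → Disjoint (J i) (J i')) ∧
        ∀ i, D i + Kcone v t =
          (D i ∩ (Submodule.span ℝ (v '' J i) : Set (Fin n → ℝ))) + Kcone v t)
    (b : Fin k → Fin n → ℝ)
    (C : Fin k → Set (Fin n → ℝ)) (hCdef : ∀ i, C i = D i + {b i})
    (bbar : Fin k → Fin k → Fin n → ℝ)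
    (hbbar : ∀ i l j,
      (i ≠ l → IsGreatest ((fun x => dotp (s i j • v j) x) '' C l) (bbar i l j)) ∧
      (i = l → bbar i l j = dotp (s i j • v j) (b i)))
    (Lb Ub : Fin k → Fin n → ℝ)
    (hLb : ∀ i j, IsLeast ((fun x => dotp (v j) x) '' C i) (Lb i j))
    (hUb : ∀ i j, IsGreatest ((fun x => dotp (v j) x) '' C i) (Ub i j)) :
    CayleyQ C = {p : (Fin n → ℝ) × (Fin k → ℝ) |
      (∀ i, 0 ≤ p.2 i) ∧ (∑ i, p.2 i = 1) ∧
      (∀ j, ∑ i, Lb i j * p.2 i ≤ dotp (v j) p.1 ∧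
            dotp (v j) p.1 ≤ ∑ i, Ub i j * p.2 i) ∧
      ∀ i,
        (0 < p.2 i →
          (∑ j, max 0 (dotp (s i j • v j) p.1 - ∑ l, bbar i l j * p.2 l) • (s i j • v j))
            ∈ p.2 i • G i) ∧
        (p.2 i = 0 →
          (∑ j, max 0 (dotp (s i j • v j) p.1 - ∑ l, bbar i l j * p.2 l) • (s i j • v j))
            ∈ recCone (G i))} := by
  obtain rfl : C = fun i => D i + {b i} := funext hCdef
  have hD i : IsCompact (D i) := (h1 i).2
  have hD0 i : (0 : Fin n → ℝ) ∈ D i := hDdef i ▸ ⟨hG0 i, zero_mem_Kcone _⟩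
  have hDconv i : Convex ℝ (D i) := hDdef i ▸ (hGconv i).inter (convex_Kcone _)
  have hUb' i j : Ub i j = dotp (v j) (b i) + supportFn (D i) (v j) :=
    (hUb i j).unique (isGreatest_image_add_singleton (hD i) ⟨0, hD0 i⟩ _ _)
  have hLb' i j : Lb i j = dotp (v j) (b i) - supportFn (D i) (-v j) :=
    (hLb i j).unique (isLeast_image_add_singleton (hD i) ⟨0, hD0 i⟩ _ _)
  have hbbar' i l j : bbar i l j =
      dotp (s i j • v j) (b l) + if i = l then 0 else supportFn (D l) (s i j • v j) := by
    split_ifs with hil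
    · rw [(hbbar i l j).2 hil, hil, add_zero]
    · exact ((hbbar i l j).1 hil).unique (isGreatest_image_add_singleton (hD l) ⟨0, hD0 l⟩ _ _)
  rw [CayleyQ_eq (fun i => (hDconv i).add (convex_singleton _))
    fun i => ⟨b i, 0, hD0 i, b i, rfl, zero_add _⟩]
  ext ⟨x, y⟩
  simp only [mem_ofPred_eq, stdSimplex, hUb', hLb', hbbar', and_assoc]
  exact and_congr_right fun hy => and_congr_right fun _ =>
    mem_image_pi_iff_constraints hvon hvspan hs hDdef hD hDconv hD0 (fun i => (h1 i).1) h2 hy b x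

/-- Theorem 5 (generalization of Theorem 3): description of the Cayley embedding for sets
`Cⁱ = (Gⁱ ∩ K^{sⁱ}) + bⁱ` satisfying the generalized monotonicity conditions. -/
theorem stmt12 {n k : ℕ}
    (v : Fin n → Fin n → ℝ)
    (hvon : ∀ j j', dotp (v j) (v j') = if j = j' then 1 else 0)
    (hvspan : Submodule.span ℝ (Set.range v) = ⊤)
    (G : Fin k → Set (Fin n → ℝ)) (hGc : ∀ i, IsClosed (G i))
    (hGconv : ∀ i, Convex ℝ (G i)) (hG0 : ∀ i, (0 : Fin n → ℝ) ∈ G i)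
    (s : Fin k → Fin n → ℝ) (hs : ∀ i j, s i j = -1 ∨ s i j = 1)
    (D : Fin k → Set (Fin n → ℝ)) (hDdef : ∀ i, D i = G i ∩ Kcone v (s i))
    (h1 : ∀ i, (D i - Kcone v (s i)) ∩ Kcone v (s i) = D i ∧ IsCompact (D i))
    (h2 : ∀ t : Fin n → ℝ, (∀ j, t j = -1 ∨ t j = 1) →
      ∃ J : Fin k → Set (Fin n), (∀ i i', i ≠ i' → Disjoint (J i) (J i')) ∧
        ∀ i, D i + Kcone v t =
          (D i ∩ (Submodule.span ℝ (v '' J i) : Set (Fin n → ℝ))) + Kcone v t)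
    (b : Fin k → Fin n → ℝ)
    (C : Fin k → Set (Fin n → ℝ)) (hCdef : ∀ i, C i = D i + {b i})
    (bbar : Fin k → Fin k → Fin n → ℝ)
    (hbbar : ∀ i l j,
      (i ≠ l → IsGreatest ((fun x => dotp (s i j • v j) x) '' C l) (bbar i l j)) ∧
      (i = l → bbar i l j = dotp (s i j • v j) (b i)))
    (Lb Ub : Fin k → Fin n → ℝ)
    (hLb : ∀ i j, IsLeast ((fun x => dotp (v j) x) '' C i) (Lb i j))
    (hUb : ∀ i j, IsGreatest ((fun x => dotp (v j) x) '' C i) (Ub i j)) :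
    CayleyQ C = {p : (Fin n → ℝ) × (Fin k → ℝ) |
      (∀ i, 0 ≤ p.2 i) ∧ (∑ i, p.2 i = 1) ∧
      (∀ j, ∑ i, Lb i j * p.2 i ≤ dotp (v j) p.1 ∧
            dotp (v j) p.1 ≤ ∑ i, Ub i j * p.2 i) ∧
      ∀ i,
        (0 < p.2 i →
          (∑ j, max 0 (dotp (s i j • v j) p.1 - ∑ l, bbar i l j * p.2 l) • (s i j • v j))
            ∈ p.2 i • G i) ∧
        (p.2 i = 0 →
          (∑ j, max 0 (dotp (s i j • v j) p.1 - ∑ l, bbar i l j * p.2 l) • (s i j • v j))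
            ∈ recCone (G i))} :=
  stmt12_general v hvon hvspan G hGconv hG0 s hs D hDdef h1 h2 b C hCdef bbar hbbar Lb Ub hLb hUb
end
end
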